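/- Fix positive integers S and K with 3 ≤ K and 4K ≤ S. For each arm k ∈ {1,…,K} let (D_{k,n})_{n=1}^S be random variables taking values in [0,1], i.i.d. with mean μ_k within each arm, the whole family being jointly independent. Let k(1),…,k(S) be arbitrary random variables on the same probability space with values in {1,…,K}, and set N_j(s) = #{u ∈ {1,…,s} : k(u) = j}. Then E[ Σ_{s=1}^S ( U_{k(s)}(N_{k(s)}(s−1)) − L_{k(s)}(N_{k(s)}(s−1)) ) ] ≤ 24·√(S K log(K)). -/

import Mathlib

open MeasureTheory ProbabilityTheory

/-- `log₊(x) = log x` if `x ≥ 1`, and `0` otherwise. -/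
noncomputable def logPlus (x : ℝ) : ℝ := if 1 ≤ x then Real.log x else 0

/-- The sample mean of the first `n` observations of arm `k`. -/
noncomputable def sampleMean {Ω : Type*} (D : ℕ → ℕ → Ω → ℝ) (k n : ℕ) (ω : Ω) : ℝ :=
  (∑ j ∈ Finset.Icc 1 n, D k j ω) / n

/-- The upper confidence bound `U_k(n) = min(1, X̄_k(n) + β_n)` with `U_k(0) = 1`,
where `β_n = √(log₊(SK/n)/n)`. -/
noncomputable def ucbU {Ω : Type*} (S K : ℕ) (D : ℕ → ℕ → Ω → ℝ) (k n : ℕ) (ω : Ω) : ℝ :=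
  if n = 0 then 1
  else min 1 (sampleMean D k n ω + Real.sqrt (logPlus ((S : ℝ) * K / n) / n))

/-- The lower confidence bound `L_k(n) = max(0, X̄_k(n) − β_n)` with `L_k(0) = 0`,
where `β_n = √(log₊(SK/n)/n)`. -/
noncomputable def lcbL {Ω : Type*} (S K : ℕ) (D : ℕ → ℕ → Ω → ℝ) (k n : ℕ) (ω : Ω) : ℝ :=
  if n = 0 then 0
  else max 0 (sampleMean D k n ω - Real.sqrt (logPlus ((S : ℝ) * K / n) / n))

/-- `N_j(s)(ω)`: the number of rounds `u ∈ {1,…,s}` in which arm `j` was selected. -/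
def selCount {Ω : Type*} (sel : ℕ → Ω → ℕ) (j s : ℕ) (ω : Ω) : ℕ :=
  ((Finset.Icc 1 s).filter (fun u => sel u ω = j)).card

lemma logPlus_nonneg (x : ℝ) : 0 ≤ logPlus x := by
  unfold logPlus; split
  · exact Real.log_nonneg (by assumption)
  · exact le_refl 0

lemma logPlus_mono {x y : ℝ} (hxy : x ≤ y) : logPlus x ≤ logPlus y := by
  unfold logPlus; split <;> split
  · exact Real.log_le_log (by linarith) hxy
  · linarith
  · exact Real.log_nonneg (by linarith)
  · exact le_refl 0

lemma sqrt_add_le (a b : ℝ) (ha : 0 ≤ a) (hb : 0 ≤ b) :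
    Real.sqrt (a + b) ≤ Real.sqrt a + Real.sqrt b := by
  have h := Real.sq_sqrt ha
  have h2 := Real.sq_sqrt hb
  have h3 : Real.sqrt (a+b) = Real.sqrt (a+b) := rfl
  nlinarith [Real.sq_sqrt (by linarith : (0:ℝ) ≤ a + b), Real.sqrt_nonneg (a+b),
    Real.sqrt_nonneg a, Real.sqrt_nonneg b, mul_nonneg (Real.sqrt_nonneg a) (Real.sqrt_nonneg b),
    sq_nonneg (Real.sqrt (a+b) - Real.sqrt a - Real.sqrt b),
    sq_nonneg (Real.sqrt (a+b) + Real.sqrt a + Real.sqrt b)]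

lemma log_le_div_e {x : ℝ} (hx : 0 < x) : Real.log x ≤ x / Real.exp 1 := by
  have h := Real.log_le_sub_one_of_pos (show 0 < x / Real.exp 1 by positivity)
  rw [Real.log_div (ne_of_gt hx) (ne_of_gt (Real.exp_pos 1)), Real.log_exp] at h
  linarith

lemma logPlus_le_sqrt (x : ℝ) : logPlus x ≤ 2 / Real.exp 1 * Real.sqrt x := by
  unfold logPlus; split
  · rename_i h
    have hx : 0 < x := by linarith
    have h1 : Real.log (Real.sqrt x) = Real.log x / 2 := Real.log_sqrt hx.le
    have h2 := log_le_div_e (Real.sqrt_pos.mpr hx)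
    have he := Real.exp_pos 1
    rw [div_mul_eq_mul_div, le_div_iff₀ he]
    rw [le_div_iff₀ he] at h2
    nlinarith
  · positivity

lemma logPlus_mul {x y : ℝ} (hx : 1 ≤ x) (hy : 1 ≤ y) :
    logPlus (x * y) = Real.log x + logPlus y := by
  unfold logPlus
  rw [if_pos hy, if_pos (one_le_mul_of_one_le_of_one_le hx hy)]
  exact Real.log_mul (by linarith) (by linarith)

lemma sum_inv_sqrt_le (m : ℕ) :
    ∑ n ∈ Finset.Ioc 0 m, 1 / Real.sqrt n ≤ 2 * Real.sqrt m := by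
  induction m with
  | zero => simp
  | succ b ih =>
    rw [Finset.sum_Ioc_succ_top (Nat.zero_le b)]
    have key : 1 / Real.sqrt (b+1) ≤ 2 * Real.sqrt (b+1) - 2 * Real.sqrt b := by
      set u := Real.sqrt (b:ℝ) with hu
      set v := Real.sqrt ((b:ℝ)+1) with hv
      have hu2 : u^2 = b := Real.sq_sqrt (Nat.cast_nonneg b)
      have hv2 : v^2 = (b:ℝ)+1 := Real.sq_sqrt (by positivity)
      have hv0 : 0 < v := Real.sqrt_pos.mpr (by positivity)
      have hu0 : 0 ≤ u := Real.sqrt_nonneg _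
      have huv : u ≤ v := Real.sqrt_le_sqrt (by linarith)
      rw [div_le_iff₀ hv0]
      nlinarith
    push_cast
    push_cast at ih
    linarith

lemma sum_inv_pow34_le (m : ℕ) :
    ∑ n ∈ Finset.Ioc 0 m, 1 / (Real.sqrt n * Real.sqrt (Real.sqrt n))
      ≤ 4 * Real.sqrt (Real.sqrt m) := by
  induction m with
  | zero => simp
  | succ b ih =>
    rw [Finset.sum_Ioc_succ_top (Nat.zero_le b)]
    have key : 1 / (Real.sqrt ((b:ℝ)+1) * Real.sqrt (Real.sqrt ((b:ℝ)+1)))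
        ≤ 4 * Real.sqrt (Real.sqrt ((b:ℝ)+1)) - 4 * Real.sqrt (Real.sqrt (b:ℝ)) := by
      set u := Real.sqrt (Real.sqrt ((b:ℝ)+1)) with hu
      set v := Real.sqrt (Real.sqrt (b:ℝ)) with hv
      have hsb : Real.sqrt ((b:ℝ)+1) = u^2 := (Real.sq_sqrt (Real.sqrt_nonneg _)).symm
      have hsb' : Real.sqrt (b:ℝ) = v^2 := (Real.sq_sqrt (Real.sqrt_nonneg _)).symm
      have hu4 : u^2 * u^2 = (b:ℝ)+1 := by
        rw [← hsb]; exact Real.mul_self_sqrt (by positivity)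
      have hv4 : v^2 * v^2 = (b:ℝ) := by
        rw [← hsb']; exact Real.mul_self_sqrt (Nat.cast_nonneg b)
      have hu0 : 0 < u := by
        rw [hu]; apply Real.sqrt_pos.mpr; apply Real.sqrt_pos.mpr; positivity
      have hv0 : 0 ≤ v := Real.sqrt_nonneg _
      have huv : v ≤ u := by
        rw [hu, hv]; exact Real.sqrt_le_sqrt (Real.sqrt_le_sqrt (by linarith))
      rw [hsb, div_le_iff₀ (by positivity)]
      nlinarith [mul_nonneg (sq_nonneg (u - v)) (by positivity : (0:ℝ) ≤ 3*u^2 + 2*u*v + v^2),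
        pow_pos hu0 3]
    push_cast
    push_cast at ih
    linarith

lemma sum_inv_pow32_aux (m : ℕ) (hm : 1 ≤ m) :
    ∀ b, m ≤ b → ∑ n ∈ Finset.Ioc m b, 1 / ((n:ℝ) * Real.sqrt n)
      ≤ 2 / Real.sqrt m - 2 / Real.sqrt b := by
  intro b hb
  induction b, hb using Nat.le_induction with
  | base => simp
  | succ b hb ih =>
    rw [Finset.sum_Ioc_succ_top hb]
    have key : 1 / (((b:ℝ)+1) * Real.sqrt ((b:ℝ)+1))
        ≤ 2 / Real.sqrt (b:ℝ) - 2 / Real.sqrt ((b:ℝ)+1) := by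
      set u := Real.sqrt (b:ℝ) with hu
      set v := Real.sqrt ((b:ℝ)+1) with hv
      have hu2 : u^2 = (b:ℝ) := Real.sq_sqrt (Nat.cast_nonneg b)
      have hv2 : v^2 = (b:ℝ)+1 := Real.sq_sqrt (by positivity)
      have hu0 : 0 < u := Real.sqrt_pos.mpr (by exact_mod_cast Nat.lt_of_lt_of_le Nat.zero_lt_one (hm.trans hb))
      have hv0 : 0 < v := Real.sqrt_pos.mpr (by positivity)
      have huv : u ≤ v := Real.sqrt_le_sqrt (by linarith)
      have h1 : (v-u)*(v+u) = 1 := by nlinarith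
      have key2 : 2*(v-u)*v^3 - u*v = v*(v-u)^2*(2*v+u) + u*v*((v-u)*(v+u) - 1) := by ring
      have h3 : u*v ≤ 2*(v-u)*v^3 := by
        nlinarith [mul_nonneg (mul_nonneg hv0.le (sq_nonneg (v-u))) (by linarith : (0:ℝ) ≤ 2*v+u)]
      rw [← hv2, div_sub_div _ _ (ne_of_gt hu0) (ne_of_gt hv0),
        div_le_div_iff₀ (by positivity) (mul_pos hu0 hv0)]
      nlinarith
    push_cast
    push_cast at ih
    linarith

lemma sum_inv_pow32_le (m b : ℕ) (hm : 1 ≤ m) :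
    ∑ n ∈ Finset.Ioc m b, 1 / ((n:ℝ) * Real.sqrt n) ≤ 2 / Real.sqrt m := by
  rcases le_or_gt m b with h | h
  · refine (sum_inv_pow32_aux m hm b h).trans ?_
    have : 0 ≤ 2 / Real.sqrt b := by positivity
    linarith
  · rw [Finset.Ioc_eq_empty (by omega)]
    simp; positivity

noncomputable def gfun (S K : ℕ) (n : ℕ) : ℝ :=
  if n = 0 then 1 else 2 * Real.sqrt (logPlus ((S : ℝ) * K / n) / n)

lemma gfun_nonneg (S K n : ℕ) : 0 ≤ gfun S K n := by
  unfold gfun; split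
  · norm_num
  · positivity

set_option maxHeartbeats 2000000 in
lemma stepC (S K : ℕ) (hK : 3 ≤ K) (hSK : 4 * K ≤ S) (c : ℕ → ℕ)
    (hcK : ∀ n, c n ≤ K) (hcS : ∀ n, (n + 1) * c n ≤ S) :
    ∑ n ∈ Finset.range S, (c n : ℝ) * gfun S K n
      ≤ 24 * Real.sqrt ((S : ℝ) * K * Real.log K) := by
  have hK0 : 0 < K := by omega
  have hS0 : 0 < S := by omega
  set m := S / K with hm
  have hm4 : 4 ≤ m := (Nat.le_div_iff_mul_le hK0).mpr hSK
  have hmKS : m * K ≤ S := Nat.div_mul_le_self S K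
  have hdm : K * m + S % K = S := by rw [hm]; exact Nat.div_add_mod S K
  have hmod := Nat.mod_lt S hK0
  have hcomm : m * K = K * m := Nat.mul_comm m K
  have hSml : S < K * m + K := by omega
  have h2Km : S ≤ 2 * (K * m) := by omega
  have hmS : m < S := by
    have h3m : 3 * m ≤ K * m := Nat.mul_le_mul_right m hK
    omega
  -- real versions
  have hKr : (3:ℝ) ≤ K := by exact_mod_cast hK
  have hlogK : 1 ≤ Real.log K := by
    rw [Real.le_log_iff_exp_le (by positivity)]
    calc Real.exp 1 ≤ 2.7182818286 := (Real.exp_one_lt_d9).le.trans (by norm_num)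
    _ ≤ 3 := by norm_num
    _ ≤ K := hKr
  have hlogK0 : (0:ℝ) ≤ Real.log K := by linarith
  set R := Real.sqrt ((S : ℝ) * K * Real.log K) with hR
  have hR0 : 0 ≤ R := Real.sqrt_nonneg _
  have hSKR : Real.sqrt ((S:ℝ) * K) ≤ R := by
    apply Real.sqrt_le_sqrt
    nlinarith [mul_nonneg (show (0:ℝ) ≤ (S:ℝ)*K by positivity) (by linarith : (0:ℝ) ≤ Real.log K - 1)]
  -- split the sum
  have hsplit : Finset.range S = insert 0 (Finset.Ioc 0 (S - 1)) := by
    ext n; simp [Finset.mem_range, Finset.mem_Ioc]; omega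
  rw [hsplit, Finset.sum_insert (by simp)]
  rw [← Finset.sum_Ioc_consecutive _ (Nat.zero_le m) (by omega : m ≤ S - 1)]
  -- term 0
  have h0 : (c 0 : ℝ) * gfun S K 0 ≤ R := by
    have : gfun S K 0 = 1 := by unfold gfun; simp
    rw [this, mul_one]
    have h1 : (c 0 : ℝ) ≤ K := by exact_mod_cast hcK 0
    have h2 : (K:ℝ) ≤ Real.sqrt ((S:ℝ)*K) := by
      rw [Real.le_sqrt (by positivity) (by positivity)]
      have : (K:ℝ) ≤ S := by exact_mod_cast le_trans (by omega) hSK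
      nlinarith [(by exact_mod_cast hK0 : (0:ℝ) < K)]
    linarith [hSKR]
  -- region I pointwise bound
  set E := Real.exp 1 with hE
  have hE0 : 0 < E := Real.exp_pos 1
  set A := 2*(K:ℝ)*Real.sqrt (2*Real.log K) with hA
  set B := 2*(K:ℝ)*Real.sqrt (2/E) * Real.sqrt (Real.sqrt ((S:ℝ)/K)) with hB
  have hA0 : 0 ≤ A := by positivity
  have hB0 : 0 ≤ B := by positivity
  have hregI : ∀ n ∈ Finset.Ioc 0 m, (c n : ℝ) * gfun S K n ≤
      A * (1/Real.sqrt n) + B * (1/(Real.sqrt n * Real.sqrt (Real.sqrt n))) := by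
    intro n hn
    obtain ⟨hn0, hnm⟩ := Finset.mem_Ioc.mp hn
    have hnr : (0:ℝ) < n := by exact_mod_cast hn0
    have hKnS : (K:ℝ) * n ≤ S := by
      exact_mod_cast (calc K * n ≤ K * m := Nat.mul_le_mul_left K hnm
        _ ≤ S := by omega)
    have hq1 : (1:ℝ) ≤ (S:ℝ)/((K:ℝ)*n) := (one_le_div (by positivity)).mpr hKnS
    have hKK : (1:ℝ) ≤ (K:ℝ)^2 := by nlinarith
    have hfact : (S:ℝ)*K/n = (K:ℝ)^2 * ((S:ℝ)/((K:ℝ)*n)) := by field_simp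
    set Q := logPlus ((S:ℝ)/((K:ℝ)*n)) with hQ
    have hQ0 : 0 ≤ Q := logPlus_nonneg _
    have hlp : logPlus ((S:ℝ)*K/n) = 2*Real.log K + Q := by
      rw [hfact, logPlus_mul hKK hq1, hQ, Real.log_pow]
      push_cast; ring
    have hsn : (0:ℝ) < Real.sqrt n := Real.sqrt_pos.mpr hnr
    have hssn : (0:ℝ) < Real.sqrt (Real.sqrt n) := Real.sqrt_pos.mpr hsn
    have gsplit : gfun S K n ≤ 2*(Real.sqrt (2*Real.log K/n) + Real.sqrt (Q/n)) := by
      unfold gfun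
      rw [if_neg (by omega), hlp, add_div]
      have := sqrt_add_le (2*Real.log K/n) (Q/n) (by positivity) (by positivity)
      linarith
    have hA1 : Real.sqrt (2*Real.log K/n) = Real.sqrt (2*Real.log K) * (1/Real.sqrt n) := by
      rw [Real.sqrt_div (by positivity), div_eq_mul_one_div]
    have hB1 : Real.sqrt (Q/n) ≤ Real.sqrt (2/E) * Real.sqrt (Real.sqrt ((S:ℝ)/K))
        * (1/(Real.sqrt n * Real.sqrt (Real.sqrt n))) := by
      have hQle : Q ≤ 2/E * Real.sqrt ((S:ℝ)/((K:ℝ)*n)) := logPlus_le_sqrt _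
      have hdd : (S:ℝ)/((K:ℝ)*n) = ((S:ℝ)/K)/n := by
        field_simp
      have hQn : Q/n ≤ (2/E * Real.sqrt ((S:ℝ)/K)) * (1/(Real.sqrt n * n)) := by
        rw [hdd, Real.sqrt_div (by positivity)] at hQle
        rw [div_le_iff₀ hnr] at *
        calc Q ≤ 2/E * (Real.sqrt ((S:ℝ)/K) / Real.sqrt n) := hQle
        _ = 2/E * Real.sqrt ((S:ℝ)/K) * (1/(Real.sqrt n * n)) * n := by
          field_simp
      calc Real.sqrt (Q/n) ≤ Real.sqrt ((2/E * Real.sqrt ((S:ℝ)/K)) * (1/(Real.sqrt n * n))) :=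
            Real.sqrt_le_sqrt hQn
      _ = Real.sqrt (2/E) * Real.sqrt (Real.sqrt ((S:ℝ)/K))
            * (1/(Real.sqrt n * Real.sqrt (Real.sqrt n))) := by
          rw [Real.sqrt_mul (by positivity), Real.sqrt_mul (by positivity), one_div, one_div,
            Real.sqrt_inv, Real.sqrt_mul (Real.sqrt_nonneg _)]
          ring_nf
    have hcn : (c n : ℝ) ≤ K := by exact_mod_cast hcK n
    calc (c n : ℝ) * gfun S K n ≤ (K:ℝ) * gfun S K n :=
          mul_le_mul_of_nonneg_right hcn (gfun_nonneg S K n)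
    _ ≤ (K:ℝ) * (2*(Real.sqrt (2*Real.log K) * (1/Real.sqrt n)
          + Real.sqrt (2/E) * Real.sqrt (Real.sqrt ((S:ℝ)/K))
            * (1/(Real.sqrt n * Real.sqrt (Real.sqrt n))))) := by
        apply mul_le_mul_of_nonneg_left _ (by positivity)
        rw [hA1] at gsplit
        have := hB1
        linarith [gsplit]
    _ = A * (1/Real.sqrt n) + B * (1/(Real.sqrt n * Real.sqrt (Real.sqrt n))) := by
        rw [hA, hB]; ring
  -- abbreviations
  set sk := Real.sqrt ((S:ℝ)*K) with hsk
  set sl := Real.sqrt (Real.log K) with hsl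
  have hRfact : R = sk * sl := Real.sqrt_mul (by positivity) _
  have hsk0 : 0 ≤ sk := Real.sqrt_nonneg _
  have hsl1 : 1 ≤ sl := by
    rw [hsl, show (1:ℝ) = Real.sqrt 1 from (Real.sqrt_one).symm]
    exact Real.sqrt_le_sqrt hlogK
  set s1 := Real.sqrt ((S:ℝ)/K) with hs1
  have hs10 : 0 ≤ s1 := Real.sqrt_nonneg _
  have hKs1 : (K:ℝ) * s1 = sk := by
    rw [hsk, hs1, show (S:ℝ)*K = ((S:ℝ)/K)*K^2 by field_simp,
      Real.sqrt_mul (by positivity), Real.sqrt_sq (by positivity)]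
    ring
  have h2l : Real.sqrt (2*Real.log K) = Real.sqrt 2 * sl := by
    rw [hsl, Real.sqrt_mul (by norm_num)]
  have hsqrt2 : Real.sqrt 2 ≤ 3/2 := by
    nlinarith [Real.sq_sqrt (by norm_num : (0:ℝ) ≤ 2), Real.sqrt_nonneg 2]
  have hE27 : (2.7182818283:ℝ) < E := Real.exp_one_gt_d9
  have h2E : 2/E ≤ 49/64 := by rw [div_le_iff₀ hE0]; linarith
  have hsqrt2E : Real.sqrt (2/E) ≤ 7/8 := by
    calc Real.sqrt (2/E) ≤ Real.sqrt (49/64) := Real.sqrt_le_sqrt h2E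
    _ = 7/8 := by
        rw [show (49:ℝ)/64 = (7/8)^2 by norm_num, Real.sqrt_sq (by norm_num)]
  -- region I sum
  have hmr : (m:ℝ) ≤ (S:ℝ)/K := by
    rw [le_div_iff₀ (by positivity)]
    exact_mod_cast hmKS
  have hsm : Real.sqrt m ≤ s1 := Real.sqrt_le_sqrt hmr
  have hssm : Real.sqrt (Real.sqrt m) ≤ Real.sqrt s1 := Real.sqrt_le_sqrt hsm
  have hsumI : ∑ n ∈ Finset.Ioc 0 m, (c n : ℝ) * gfun S K n ≤ 13 * R := by
    calc ∑ n ∈ Finset.Ioc 0 m, (c n : ℝ) * gfun S K n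
        ≤ ∑ n ∈ Finset.Ioc 0 m, (A * (1/Real.sqrt n)
            + B * (1/(Real.sqrt n * Real.sqrt (Real.sqrt n)))) := Finset.sum_le_sum hregI
    _ = A * ∑ n ∈ Finset.Ioc 0 m, 1/Real.sqrt n
        + B * ∑ n ∈ Finset.Ioc 0 m, 1/(Real.sqrt n * Real.sqrt (Real.sqrt n)) := by
          rw [Finset.sum_add_distrib, Finset.mul_sum, Finset.mul_sum]
    _ ≤ A * (2 * Real.sqrt m) + B * (4 * Real.sqrt (Real.sqrt m)) := by
          have h1 := sum_inv_sqrt_le m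
          have h2 := sum_inv_pow34_le m
          have t1 := mul_le_mul_of_nonneg_left h1 hA0
          have t2 := mul_le_mul_of_nonneg_left h2 hB0
          linarith
    _ ≤ A * (2 * s1) + B * (4 * Real.sqrt s1) := by
          have t1 := mul_le_mul_of_nonneg_left hsm hA0
          have t2 := mul_le_mul_of_nonneg_left hssm hB0
          nlinarith
    _ ≤ 13 * R := by
          have e1 : A * (2 * s1) = 4 * (Real.sqrt 2 * sl) * sk := by
            rw [hA, h2l, ← hKs1]; ring
          have hss1 : Real.sqrt s1 * Real.sqrt s1 = s1 := Real.mul_self_sqrt hs10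
          have e2 : B * (4 * Real.sqrt s1) = 8 * Real.sqrt (2/E) * sk := by
            rw [hB, ← hKs1]
            linear_combination (8*(K:ℝ)*Real.sqrt (2/E))*hss1
          rw [e1, e2, hRfact]
          nlinarith [mul_nonneg hsk0 (by linarith : (0:ℝ) ≤ sl - 1),
            mul_nonneg hsk0 (by linarith : (0:ℝ) ≤ sl)]
  -- region II
  have hregII : ∀ n ∈ Finset.Ioc m (S-1), (c n : ℝ) * gfun S K n ≤
      (2*(S:ℝ)*Real.sqrt (2*Real.log K)) * (1/((n:ℝ)*Real.sqrt n)) := by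
    intro n hn
    obtain ⟨hmn, hnS⟩ := Finset.mem_Ioc.mp hn
    have hn0 : 0 < n := by omega
    have hnr : (0:ℝ) < n := by exact_mod_cast hn0
    have hsn : (0:ℝ) < Real.sqrt n := Real.sqrt_pos.mpr hnr
    have hSKn : (S:ℝ) ≤ (K:ℝ)*n := by
      exact_mod_cast (calc S ≤ K * (m+1) := by rw [Nat.mul_succ]; omega
        _ ≤ K * n := Nat.mul_le_mul_left K (by omega))
    have hub : (S:ℝ)*K/n ≤ (K:ℝ)*K := by
      rw [div_le_iff₀ hnr]
      nlinarith [(by exact_mod_cast hK0 : (0:ℝ) < K)]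
    have hKK2 : logPlus ((K:ℝ)*K) = 2*Real.log K := by
      unfold logPlus
      rw [if_pos (by nlinarith), Real.log_mul (by positivity) (by positivity)]
      ring
    have hlp2 : logPlus ((S:ℝ)*K/n) ≤ 2*Real.log K := by
      rw [← hKK2]; exact logPlus_mono hub
    have hg : gfun S K n ≤ 2*Real.sqrt (2*Real.log K) * (1/Real.sqrt n) := by
      unfold gfun
      rw [if_neg (by omega)]
      calc 2 * Real.sqrt (logPlus ((S:ℝ)*K/n) / n) ≤ 2 * Real.sqrt (2*Real.log K/n) := by
            have : logPlus ((S:ℝ)*K/n) / n ≤ 2*Real.log K/n := by gcongr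
            have := Real.sqrt_le_sqrt this
            linarith
      _ = 2*Real.sqrt (2*Real.log K) * (1/Real.sqrt n) := by
            rw [Real.sqrt_div (by positivity)]; ring
    have hcn' : (n:ℝ) * c n ≤ S := by
      exact_mod_cast (calc n * c n ≤ (n+1) * c n := Nat.mul_le_mul_right _ (by omega)
        _ ≤ S := hcS n)
    have hcle : (c n:ℝ) ≤ (S:ℝ)/n := by
      rw [le_div_iff₀ hnr]; linarith [hcn']
    calc (c n:ℝ) * gfun S K n
        ≤ ((S:ℝ)/n) * (2*Real.sqrt (2*Real.log K) * (1/Real.sqrt n)) :=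
          mul_le_mul hcle hg (gfun_nonneg S K n) (by positivity)
    _ = (2*(S:ℝ)*Real.sqrt (2*Real.log K)) * (1/((n:ℝ)*Real.sqrt n)) := by
          field_simp
  have hsumII : ∑ n ∈ Finset.Ioc m (S-1), (c n : ℝ) * gfun S K n ≤ 8 * R := by
    have hsS0 : (0:ℝ) < Real.sqrt S := Real.sqrt_pos.mpr (by exact_mod_cast hS0)
    have hm0r : (0:ℝ) < Real.sqrt m := Real.sqrt_pos.mpr (by exact_mod_cast (by omega : 0 < m))
    have hm2 : (S:ℝ)/(2*K) ≤ (m:ℝ) := by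
      rw [div_le_iff₀ (by positivity)]
      exact_mod_cast (calc S ≤ 2*(K*m) := h2Km
        _ = m * (2*K) := by ring)
    have hlow : Real.sqrt S / Real.sqrt (2*(K:ℝ)) ≤ Real.sqrt m := by
      rw [← Real.sqrt_div (by positivity : (0:ℝ) ≤ (S:ℝ))]
      exact Real.sqrt_le_sqrt hm2
    have hlow0 : (0:ℝ) < Real.sqrt S / Real.sqrt (2*(K:ℝ)) := by positivity
    have hinv : 2 / Real.sqrt m ≤ 2 * Real.sqrt (2*(K:ℝ)) / Real.sqrt S := by
      calc 2 / Real.sqrt m ≤ 2 / (Real.sqrt S / Real.sqrt (2*(K:ℝ))) :=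
            div_le_div_of_nonneg_left (by norm_num) hlow0 hlow
      _ = 2 * Real.sqrt (2*(K:ℝ)) / Real.sqrt S := div_div_eq_mul_div 2 _ _
    have hCpos : (0:ℝ) ≤ 2*(S:ℝ)*Real.sqrt (2*Real.log K) := by positivity
    have hfin : (2*(S:ℝ)*Real.sqrt (2*Real.log K)) * (2 * Real.sqrt (2*(K:ℝ)) / Real.sqrt S)
        = 8 * R := by
      have ha : Real.sqrt 2 * Real.sqrt 2 = 2 := Real.mul_self_sqrt (by norm_num)
      have hs : Real.sqrt (S:ℝ) * Real.sqrt (S:ℝ) = (S:ℝ) := Real.mul_self_sqrt (by positivity)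
      have h2K : Real.sqrt (2*(K:ℝ)) = Real.sqrt 2 * Real.sqrt (K:ℝ) :=
        Real.sqrt_mul (by norm_num) _
      have hskm : sk = Real.sqrt (S:ℝ) * Real.sqrt (K:ℝ) := Real.sqrt_mul (by positivity) _
      rw [hRfact, h2l, h2K, hskm, ← mul_div_assoc, div_eq_iff (ne_of_gt hsS0)]
      linear_combination (4*(S:ℝ)*sl*Real.sqrt (K:ℝ))*ha - (8*sl*Real.sqrt (K:ℝ))*hs
    calc ∑ n ∈ Finset.Ioc m (S-1), (c n : ℝ) * gfun S K n
        ≤ ∑ n ∈ Finset.Ioc m (S-1), (2*(S:ℝ)*Real.sqrt (2*Real.log K)) * (1/((n:ℝ)*Real.sqrt n)) :=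
          Finset.sum_le_sum hregII
    _ = (2*(S:ℝ)*Real.sqrt (2*Real.log K)) * ∑ n ∈ Finset.Ioc m (S-1), 1/((n:ℝ)*Real.sqrt n) := by
          rw [Finset.mul_sum]
    _ ≤ (2*(S:ℝ)*Real.sqrt (2*Real.log K)) * (2 / Real.sqrt m) := by
          exact mul_le_mul_of_nonneg_left (sum_inv_pow32_le m (S-1) (by omega)) hCpos
    _ ≤ (2*(S:ℝ)*Real.sqrt (2*Real.log K)) * (2 * Real.sqrt (2*(K:ℝ)) / Real.sqrt S) :=
          mul_le_mul_of_nonneg_left hinv hCpos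
    _ = 8 * R := hfin
  linarith [h0, hsumI, hsumII, hR0]
lemma ucb_sub_lcb_le {Ω : Type*} (S K : ℕ) (D : ℕ → ℕ → Ω → ℝ) (k n : ℕ) (ω : Ω) :
    ucbU S K D k n ω - lcbL S K D k n ω ≤ gfun S K n := by
  unfold ucbU lcbL gfun
  by_cases h : n = 0
  · rw [if_pos h, if_pos h, if_pos h]; norm_num
  · rw [if_neg h, if_neg h, if_neg h]
    have h1 := min_le_right 1 (sampleMean D k n ω + Real.sqrt (logPlus ((S:ℝ)*K/n)/n))
    have h2 := le_max_right 0 (sampleMean D k n ω - Real.sqrt (logPlus ((S:ℝ)*K/n)/n))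
    linarith

set_option maxHeartbeats 1000000 in
lemma key_pointwise {Ω : Type*} (S K : ℕ) (hK : 3 ≤ K) (hSK : 4 * K ≤ S)
    (D : ℕ → ℕ → Ω → ℝ) (sel : ℕ → Ω → ℕ)
    (hselrange : ∀ s ∈ Finset.Icc 1 S, ∀ ω, sel s ω ∈ Finset.Icc 1 K) (ω : Ω) :
    ∑ s ∈ Finset.Icc 1 S,
      (ucbU S K D (sel s ω) (selCount sel (sel s ω) (s - 1) ω) ω
        - lcbL S K D (sel s ω) (selCount sel (sel s ω) (s - 1) ω) ω)
      ≤ 24 * Real.sqrt ((S : ℝ) * K * Real.log K) := by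
  classical
  have hS1 : 1 ≤ S := by omega
  -- selCount basic facts
  have hmono : ∀ j s t, s ≤ t → selCount sel j s ω ≤ selCount sel j t ω := by
    intro j s t hst
    exact Finset.card_le_card (Finset.filter_subset_filter _
      (Finset.Icc_subset_Icc le_rfl hst))
  have hstep : ∀ s, 1 ≤ s → selCount sel (sel s ω) s ω
      = selCount sel (sel s ω) (s-1) ω + 1 := by
    intro s hs
    unfold selCount
    have hins : Finset.Icc 1 s = insert s (Finset.Icc 1 (s-1)) := by
      ext u; simp [Finset.mem_Icc, Finset.mem_insert]; omega
    rw [hins, Finset.filter_insert, if_pos rfl,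
      Finset.card_insert_of_notMem (by simp [Finset.mem_Icc]; omega)]
  have hle : ∀ s, selCount sel (sel s ω) (s-1) ω ≤ s - 1 := by
    intro s
    calc selCount sel (sel s ω) (s-1) ω ≤ (Finset.Icc 1 (s-1)).card :=
          Finset.card_filter_le _ _
    _ = s - 1 := by rw [Nat.card_Icc]; omega
  set F : ℕ → ℕ × ℕ := fun s => (sel s ω, selCount sel (sel s ω) (s-1) ω) with hF
  have hinjlt : ∀ x y, x ∈ Finset.Icc 1 S → y ∈ Finset.Icc 1 S → x < y → F x ≠ F y := by
    intro x y hx hy hxy heq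
    rw [Finset.mem_Icc] at hx hy
    simp only [hF, Prod.mk.injEq] at heq
    obtain ⟨h1, h2⟩ := heq
    have h3 := hstep x hx.1
    have h4 : selCount sel (sel x ω) x ω ≤ selCount sel (sel x ω) (y-1) ω :=
      hmono _ _ _ (by omega)
    rw [h1] at h2 h3 h4
    omega
  have hinj : ∀ x ∈ Finset.Icc 1 S, ∀ y ∈ Finset.Icc 1 S, F x = F y → x = y := by
    intro x hx y hy heq
    rcases lt_trichotomy x y with h | h | h
    · exact absurd heq (hinjlt x y hx hy h)
    · exact h
    · exact absurd heq.symm (hinjlt y x hy hx h)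
  set A := (Finset.Icc 1 S).image F with hA
  have hmapsto : ∀ p ∈ A, p.2 ∈ Finset.range S := by
    intro p hp
    obtain ⟨s, hs, rfl⟩ := Finset.mem_image.mp hp
    rw [Finset.mem_Icc] at hs
    have := hle s
    simp only [Finset.mem_range, hF]
    omega
  set c : ℕ → ℕ := fun n => (A.filter (fun p => p.2 = n)).card with hc
  -- total selCount bound
  have htot : ∑ j ∈ Finset.Icc 1 K, selCount sel j S ω = S := by
    have := Finset.card_eq_sum_card_fiberwise
      (f := fun u => sel u ω) (s := Finset.Icc 1 S) (t := Finset.Icc 1 K)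
      (fun x hx => hselrange x hx ω)
    rw [Nat.card_Icc] at this
    unfold selCount
    omega
  -- fiber bounds
  have hfib : ∀ n, c n ≤ K ∧ (n+1) * c n ≤ S := by
    intro n
    set Bn := (A.filter (fun p => p.2 = n)).image Prod.fst with hBn
    have hcard : Bn.card = c n := by
      rw [hBn]
      apply Finset.card_image_of_injOn
      intro p hp q hq hpq
      simp only [Finset.coe_filter, Set.mem_setOf_eq] at hp hq
      exact Prod.ext hpq (hp.2.trans hq.2.symm)
    have hsub : Bn ⊆ (Finset.Icc 1 K).filter (fun j => n+1 ≤ selCount sel j S ω) := by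
      intro j hj
      obtain ⟨p, hp, rfl⟩ := Finset.mem_image.mp hj
      rw [Finset.mem_filter] at hp
      obtain ⟨hpA, hpn⟩ := hp
      obtain ⟨s, hs, rfl⟩ := Finset.mem_image.mp hpA
      rw [Finset.mem_Icc] at hs
      rw [Finset.mem_filter]
      constructor
      · exact hselrange s (Finset.mem_Icc.mpr hs) ω
      · have h3 := hstep s hs.1
        have h4 : selCount sel (sel s ω) s ω ≤ selCount sel (sel s ω) S ω :=
          hmono _ _ _ hs.2
        simp only [hF] at hpn ⊢
        omega
    constructor
    · calc c n = Bn.card := hcard.symm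
      _ ≤ ((Finset.Icc 1 K).filter (fun j => n+1 ≤ selCount sel j S ω)).card :=
          Finset.card_le_card hsub
      _ ≤ (Finset.Icc 1 K).card := Finset.card_filter_le _ _
      _ = K := by rw [Nat.card_Icc]; omega
    · calc (n+1) * c n = ∑ _j ∈ Bn, (n+1) := by rw [Finset.sum_const, hcard]; ring
      _ ≤ ∑ j ∈ Bn, selCount sel j S ω := by
          apply Finset.sum_le_sum
          intro j hj
          exact (Finset.mem_filter.mp (hsub hj)).2
      _ ≤ ∑ j ∈ Finset.Icc 1 K, selCount sel j S ω := by
          apply Finset.sum_le_sum_of_subset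
          exact fun j hj => (Finset.mem_filter.mp (hsub hj)).1
      _ = S := htot
  -- convert the sum
  have hconv : ∑ s ∈ Finset.Icc 1 S, gfun S K (selCount sel (sel s ω) (s-1) ω)
      = ∑ n ∈ Finset.range S, (c n : ℝ) * gfun S K n := by
    have e1 : ∑ s ∈ Finset.Icc 1 S, gfun S K (selCount sel (sel s ω) (s-1) ω)
        = ∑ p ∈ A, gfun S K p.2 := by
      rw [hA, Finset.sum_image hinj]
    rw [e1, ← Finset.sum_fiberwise_of_maps_to hmapsto (fun p => gfun S K p.2)]
    apply Finset.sum_congr rfl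
    intro n _
    calc ∑ p ∈ A.filter (fun p => p.2 = n), gfun S K p.2
        = ∑ p ∈ A.filter (fun p => p.2 = n), gfun S K n := by
          apply Finset.sum_congr rfl
          intro p hp
          rw [(Finset.mem_filter.mp hp).2]
    _ = (c n : ℝ) * gfun S K n := by
          rw [Finset.sum_const, hc, nsmul_eq_mul]
  calc ∑ s ∈ Finset.Icc 1 S,
      (ucbU S K D (sel s ω) (selCount sel (sel s ω) (s - 1) ω) ω
        - lcbL S K D (sel s ω) (selCount sel (sel s ω) (s - 1) ω) ω)
      ≤ ∑ s ∈ Finset.Icc 1 S, gfun S K (selCount sel (sel s ω) (s-1) ω) :=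
        Finset.sum_le_sum (fun s _ => ucb_sub_lcb_le S K D _ _ ω)
  _ = ∑ n ∈ Finset.range S, (c n : ℝ) * gfun S K n := hconv
  _ ≤ 24 * Real.sqrt ((S : ℝ) * K * Real.log K) :=
      stepC S K hK hSK c (fun n => (hfib n).1) (fun n => (hfib n).2)


/-- `E[Σ_{s=1}^S (U_{k(s)}(N_{k(s)}(s−1)) − L_{k(s)}(N_{k(s)}(s−1)))] ≤ 24√(SK log K)`
for an arbitrary arm-selection process. -/
theorem ucb_lcb_width_selected_bound
    {Ω : Type*} [MeasurableSpace Ω] (P : Measure Ω) [IsProbabilityMeasure P]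
    (S K : ℕ) (hK : 3 ≤ K) (hSK : 4 * K ≤ S)
    (D : ℕ → ℕ → Ω → ℝ) (hDmeas : ∀ k n, Measurable (D k n))
    (hindep : iIndepFun
      (fun p : Fin K × Fin S => D ((p.1 : ℕ) + 1) ((p.2 : ℕ) + 1)) P)
    (hident : ∀ k ∈ Finset.Icc 1 K, ∀ n ∈ Finset.Icc 1 S, IdentDistrib (D k n) (D k 1) P P)
    (hbdd : ∀ k ∈ Finset.Icc 1 K, ∀ n ∈ Finset.Icc 1 S, ∀ᵐ ω ∂P, D k n ω ∈ Set.Icc (0 : ℝ) 1)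
    (μ : ℕ → ℝ) (hmean : ∀ k ∈ Finset.Icc 1 K, ∫ ω, D k 1 ω ∂P = μ k)
    (sel : ℕ → Ω → ℕ) (hselmeas : ∀ s, Measurable (sel s))
    (hselrange : ∀ s ∈ Finset.Icc 1 S, ∀ ω, sel s ω ∈ Finset.Icc 1 K) :
    ∫ ω, ∑ s ∈ Finset.Icc 1 S,
      (ucbU S K D (sel s ω) (selCount sel (sel s ω) (s - 1) ω) ω
        - lcbL S K D (sel s ω) (selCount sel (sel s ω) (s - 1) ω) ω) ∂P
      ≤ 24 * Real.sqrt ((S : ℝ) * K * Real.log K) := by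
  set f : Ω → ℝ := fun ω => ∑ s ∈ Finset.Icc 1 S,
      (ucbU S K D (sel s ω) (selCount sel (sel s ω) (s - 1) ω) ω
        - lcbL S K D (sel s ω) (selCount sel (sel s ω) (s - 1) ω) ω) with hf
  have hpt : ∀ ω, f ω ≤ 24 * Real.sqrt ((S : ℝ) * K * Real.log K) :=
    fun ω => key_pointwise S K hK hSK D sel hselrange ω
  by_cases hInt : Integrable f P
  · have h1 : ∫ ω, f ω ∂P ≤ ∫ _ω, 24 * Real.sqrt ((S : ℝ) * K * Real.log K) ∂P :=
      integral_mono_ae hInt (integrable_const _) (Filter.Eventually.of_forall hpt)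
    rwa [integral_const, probReal_univ, one_smul] at h1
  · rw [MeasureTheory.integral_undef hInt]
    positivity
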